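/- Let B and J be diagonal 3×3 real matrices, each with pairwise distinct diagonal entries. Then the composed linear map μ ↦ [B, [J, μ]] is an invertible linear operator on the 3-dimensional space of skew-symmetric 3×3 real matrices. -/
import Mathlib


open Matrix

private lemma diag_mul_apply {D M : Matrix (Fin 3) (Fin 3) ℝ} (hD : D.IsDiag) (i j : Fin 3) :
    (D * M) i j = D i i * M i j := by
  rw [Matrix.mul_apply]
  apply Finset.sum_eq_single i
  · intro k _ hk; rw [hD hk.symm, zero_mul]
  · intro h; exact absurd (Finset.mem_univ i) h

private lemma mul_diag_apply {D M : Matrix (Fin 3) (Fin 3) ℝ} (hD : D.IsDiag) (i j : Fin 3) :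
    (M * D) i j = M i j * D j j := by
  rw [Matrix.mul_apply]
  apply Finset.sum_eq_single j
  · intro k _ hk; rw [hD hk, mul_zero]
  · intro h; exact absurd (Finset.mem_univ j) h

private lemma key_apply {B J μ : Matrix (Fin 3) (Fin 3) ℝ} (hB : B.IsDiag) (hJ : J.IsDiag)
    (i j : Fin 3) :
    (B * (J * μ - μ * J) - (J * μ - μ * J) * B) i j
      = (B i i - B j j) * ((J i i - J j j) * μ i j) := by
  simp only [Matrix.sub_apply, Matrix.mul_sub, Matrix.sub_mul,
    diag_mul_apply hB, mul_diag_apply hB, diag_mul_apply hJ, mul_diag_apply hJ]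
  ring

/-- If B and J are diagonal with pairwise distinct diagonal entries, then
μ ↦ [B,[J,μ]] is invertible (injective and surjective) on skew-symmetric matrices. -/
theorem adB_adJ_invertible (B J : Matrix (Fin 3) (Fin 3) ℝ)
    (hB : B.IsDiag) (hJ : J.IsDiag)
    (hBd : ∀ i j, i ≠ j → B i i ≠ B j j) (hJd : ∀ i j, i ≠ j → J i i ≠ J j j) :
    (∀ μ : Matrix (Fin 3) (Fin 3) ℝ, μᵀ = -μ →
        B * (J * μ - μ * J) - (J * μ - μ * J) * B = 0 → μ = 0) ∧
    (∀ ν : Matrix (Fin 3) (Fin 3) ℝ, νᵀ = -ν → ∃ μ, μᵀ = -μ ∧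
        B * (J * μ - μ * J) - (J * μ - μ * J) * B = ν) := by
  constructor
  · intro μ hμ h
    ext i j
    have h0 := congrFun (congrFun h i) j
    rw [key_apply hB hJ i j] at h0
    simp only [Matrix.zero_apply] at h0 ⊢
    rcases eq_or_ne i j with rfl | hij
    · have := congrFun (congrFun hμ i) i
      simp only [Matrix.transpose_apply, Matrix.neg_apply] at this
      linarith
    · rcases mul_eq_zero.mp h0 with hc | hc
      · exact absurd hc (sub_ne_zero.mpr (hBd i j hij))
      · rcases mul_eq_zero.mp hc with hc' | hc'
        · exact absurd hc' (sub_ne_zero.mpr (hJd i j hij))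
        · exact hc'
  · intro ν hν
    have hνskew : ∀ i j, ν j i = -ν i j := fun i j => by
      have := congrFun (congrFun hν i) j
      simpa [Matrix.transpose_apply, Matrix.neg_apply] using this
    refine ⟨Matrix.of fun i j =>
      if h : i = j then 0 else ν i j / ((B i i - B j j) * (J i i - J j j)), ?_, ?_⟩
    · ext i j
      simp only [Matrix.transpose_apply, Matrix.neg_apply, Matrix.of_apply]
      rcases eq_or_ne i j with rfl | hij
      · simp
      · have hden : (B j j - B i i) * (J j j - J i i)
            = (B i i - B j j) * (J i i - J j j) := by ring
        rw [dif_neg (Ne.symm hij), dif_neg hij, hνskew i j, hden, neg_div]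
    · ext i j
      rw [key_apply hB hJ i j]
      simp only [Matrix.of_apply]
      rcases eq_or_ne i j with rfl | hij
      · have := hνskew i i
        simp only [dif_pos rfl]
        linarith [this]
      · rw [dif_neg hij]
        have hb := sub_ne_zero.mpr (hBd i j hij)
        have hjd := sub_ne_zero.mpr (hJd i j hij)
        field_simp
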